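/- Meta-converse for channel discrimination: let N, M : A → B be quantum channels, let n ∈ ℕ, and consider any n-round adaptive channel discrimination protocol with final decision probabilities p (when the channel is N) and q (when the channel is M). Then for any faithful generalized divergence D (i.e., D(ρ‖ρ) ≤ 0 for all states ρ), the binary divergence satisfies D(p‖q) ≤ n · D^A(N‖M), where D(p‖q) := D(diag(p, 1−p) ‖ diag(q, 1−q)). -/

import Mathlib

open scoped BigOperators ComplexOrder

noncomputable section

attribute [local instance] Classical.propDecidable

/-- A density matrix (quantum state): positive semidefinite with unit trace. -/
def IsDensity {ι : Type} [Fintype ι] (ρ : Matrix ι ι ℂ) : Prop :=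
  ρ.PosSemidef ∧ ρ.trace = 1

/-- The map `id_R ⊗ Φ` (for linear `Φ`), defined blockwise. -/
def idTensor {R ι κ : Type} (Φ : Matrix ι ι ℂ → Matrix κ κ ℂ)
    (X : Matrix (R × ι) (R × ι) ℂ) : Matrix (R × κ) (R × κ) ℂ :=
  fun p q => Φ (fun a b => X (p.1, a) (q.1, b)) p.2 q.2

/-- The map `Φ ⊗ id_E` (for linear `Φ`), defined blockwise. -/
def tensorId {ι κ E : Type} (Φ : Matrix ι ι ℂ → Matrix κ κ ℂ)
    (X : Matrix (ι × E) (ι × E) ℂ) : Matrix (κ × E) (κ × E) ℂ :=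
  fun p q => Φ (fun a b => X (a, p.2) (b, q.2)) p.1 q.1

/-- A quantum channel: linear, trace preserving, and completely positive. -/
structure IsChannel {ι κ : Type} [Fintype ι] [Fintype κ]
    (Φ : Matrix ι ι ℂ → Matrix κ κ ℂ) : Prop where
  linear : IsLinearMap ℂ Φ
  tracePres : ∀ X, (Φ X).trace = X.trace
  compPos : ∀ (k : ℕ) (X : Matrix (Fin k × ι) (Fin k × ι) ℂ),
      X.PosSemidef → (idTensor Φ X).PosSemidef

/-- A family of divergences, one for every finite dimension. -/
abbrev DivFam : Type 1 :=
  ∀ (ι : Type) [Fintype ι] [DecidableEq ι], Matrix ι ι ℂ → Matrix ι ι ℂ → EReal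

/-- Data processing: a generalized divergence does not increase under channels. -/
def DivDataProcessing (D : DivFam) : Prop :=
  ∀ (ι κ : Type) [Fintype ι] [DecidableEq ι] [Fintype κ] [DecidableEq κ]
    (Φ : Matrix ι ι ℂ → Matrix κ κ ℂ), IsChannel Φ →
    ∀ ρ σ : Matrix ι ι ℂ, IsDensity ρ → IsDensity σ →
      D κ (Φ ρ) (Φ σ) ≤ D ι ρ σ

/-- Faithfulness: `D(ρ‖ρ) ≤ 0` for every state `ρ`. -/
def DivFaithful (D : DivFam) : Prop :=
  ∀ (ι : Type) [Fintype ι] [DecidableEq ι] (ρ : Matrix ι ι ℂ),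
    IsDensity ρ → D ι ρ ρ ≤ 0

/-- Strong faithfulness: `D(ρ‖σ) = 0` iff `ρ = σ`. -/
def DivStronglyFaithful (D : DivFam) : Prop :=
  ∀ (ι : Type) [Fintype ι] [DecidableEq ι] (ρ σ : Matrix ι ι ℂ),
    IsDensity ρ → IsDensity σ → (D ι ρ σ = 0 ↔ ρ = σ)

/-- The generalized channel divergence `D(N‖M)`. -/
def channelDiv (D : DivFam) {ι κ : Type} [Fintype ι] [DecidableEq ι] [Fintype κ] [DecidableEq κ]
    (N M : Matrix ι ι ℂ → Matrix κ κ ℂ) : EReal :=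
  ⨆ (R : ℕ) (ρ : Matrix (Fin R × ι) (Fin R × ι) ℂ) (_ : IsDensity ρ),
    D (Fin R × κ) (idTensor N ρ) (idTensor M ρ)

/-- The amortized channel divergence `D^𝒜(N‖M)`. -/
def amortizedDiv (D : DivFam) {ι κ : Type} [Fintype ι] [DecidableEq ι] [Fintype κ] [DecidableEq κ]
    (N M : Matrix ι ι ℂ → Matrix κ κ ℂ) : EReal :=
  ⨆ (R : ℕ) (ρ : Matrix (Fin R × ι) (Fin R × ι) ℂ) (σ : Matrix (Fin R × ι) (Fin R × ι) ℂ)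
    (_ : IsDensity ρ) (_ : IsDensity σ),
      D (Fin R × κ) (idTensor N ρ) (idTensor M σ) - D (Fin R × ι) ρ σ

/-- Apply a real function to a Hermitian matrix via the spectral decomposition. -/
def hermFun {ι : Type} [Fintype ι] [DecidableEq ι] (f : ℝ → ℝ) (A : Matrix ι ι ℂ) :
    Matrix ι ι ℂ :=
  if hA : A.IsHermitian then
    (hA.eigenvectorUnitary : Matrix ι ι ℂ) *
      Matrix.diagonal (fun i => (f (hA.eigenvalues i) : ℂ)) *
      star (hA.eigenvectorUnitary : Matrix ι ι ℂ)
  else 0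

/-- Real matrix power via spectral calculus, with the generalized-inverse convention `0 ↦ 0`. -/
def matPow {ι : Type} [Fintype ι] [DecidableEq ι] (A : Matrix ι ι ℂ) (r : ℝ) : Matrix ι ι ℂ :=
  hermFun (fun x => if x = 0 then 0 else Real.rpow x r) A

/-- Matrix base-2 logarithm via spectral calculus, taken on the support. -/
def matLog2 {ι : Type} [Fintype ι] [DecidableEq ι] (A : Matrix ι ι ℂ) : Matrix ι ι ℂ :=
  hermFun (fun x => if x = 0 then 0 else Real.logb 2 x) A

/-- The projection onto the support of a Hermitian matrix. -/
def suppProj {ι : Type} [Fintype ι] [DecidableEq ι] (A : Matrix ι ι ℂ) : Matrix ι ι ℂ :=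
  hermFun (fun x => if x = 0 then 0 else 1) A

/-- `supp ρ ⊆ supp σ`, expressed (for Hermitian matrices) as kernel containment
`ker σ ⊆ ker ρ`. -/
def suppLE {ι : Type} [Fintype ι] (ρ σ : Matrix ι ι ℂ) : Prop :=
  ∀ v : ι → ℂ, σ.mulVec v = 0 → ρ.mulVec v = 0

/-- The quantum relative entropy `D(ρ‖σ) = Tr[ρ(log₂ρ − log₂σ)]`,
`+∞` if the support condition fails. -/
def relEnt {ι : Type} [Fintype ι] [DecidableEq ι] (ρ σ : Matrix ι ι ℂ) : EReal :=
  if suppLE ρ σ then (((ρ * (matLog2 ρ - matLog2 σ)).trace).re : EReal) else ⊤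

/-- `−log₂ x` as an extended real, with `−log₂ 0 = +∞`. -/
def negLog2 (x : ℝ) : EReal :=
  if x ≤ 0 then ⊤ else ((-Real.logb 2 x : ℝ) : EReal)

/-- The max-relative entropy `D_max(ρ‖σ) = inf{λ : ρ ≤ 2^λ σ}` (Loewner order). -/
def Dmax {ι : Type} [Fintype ι] (ρ σ : Matrix ι ι ℂ) : EReal :=
  ⨅ (l : ℝ) (_ : (((2 : ℝ) ^ l) • σ - ρ).PosSemidef), (l : EReal)

/-- The sandwiched Rényi divergence `D̃_α`. -/
def sandRenyi {ι : Type} [Fintype ι] [DecidableEq ι] (α : ℝ) (ρ σ : Matrix ι ι ℂ) : EReal :=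
  if α = 1 then relEnt ρ σ
  else if 1 < α ∧ ¬ suppLE ρ σ then ⊤
  else if α < 1 ∧ (ρ * σ).trace = 0 then ⊤
  else ((((α - 1)⁻¹ *
      Real.logb 2
        (((matPow (matPow σ ((1 - α) / (2 * α)) * ρ * matPow σ ((1 - α) / (2 * α))) α).trace).re)) :
        ℝ) : EReal)

/-- The Petz–Rényi divergence `D_α`. -/
def petzRenyi {ι : Type} [Fintype ι] [DecidableEq ι] (α : ℝ) (ρ σ : Matrix ι ι ℂ) : EReal :=
  if α = 0 then negLog2 (((suppProj ρ * σ).trace).re)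
  else if α = 1 then relEnt ρ σ
  else if 1 < α ∧ ¬ suppLE ρ σ then ⊤
  else if α < 1 ∧ (ρ * σ).trace = 0 then ⊤
  else ((((α - 1)⁻¹ * Real.logb 2 (((matPow ρ α * matPow σ (1 - α)).trace).re)) : ℝ) : EReal)

/-- The trace norm `‖X‖₁ = Tr √(XᴴX)`. -/
def traceNorm {ι : Type} [Fintype ι] [DecidableEq ι] (X : Matrix ι ι ℂ) : ℝ :=
  ((matPow (X.conjTranspose * X) (1/2 : ℝ)).trace).re

/-- The fidelity `F(ρ,σ) = ‖√ρ√σ‖₁²`. -/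
def matFidelity {ι : Type} [Fintype ι] [DecidableEq ι] (ρ σ : Matrix ι ι ℂ) : ℝ :=
  (traceNorm (matPow ρ (1/2 : ℝ) * matPow σ (1/2 : ℝ))) ^ 2

def relEntFam : DivFam := fun _ _ _ ρ σ => relEnt ρ σ
def DmaxFam : DivFam := fun _ _ _ ρ σ => Dmax ρ σ
def sandFam (α : ℝ) : DivFam := fun _ _ _ ρ σ => sandRenyi α ρ σ
def petzFam (α : ℝ) : DivFam := fun _ _ _ ρ σ => petzRenyi α ρ σ
/-- `D̃_{1/2}(ρ‖σ) = −log₂ F(ρ,σ)` as a divergence family. -/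
def fidDivFam : DivFam := fun _ _ _ ρ σ => negLog2 (matFidelity ρ σ)

/-- The classical-quantum state `Σ_x p(x) |x⟩⟨x| ⊗ ρ^x`. -/
def cqState {X ι : Type} [DecidableEq X] (p : X → ℝ) (ρ : X → Matrix ι ι ℂ) :
    Matrix (X × ι) (X × ι) ℂ :=
  fun a b => if a.1 = b.1 then (p a.1 : ℂ) * ρ a.1 a.2 b.2 else 0

/-- The direct-sum property of a generalized divergence on classical-quantum states. -/
def DivDirectSum (D : DivFam) : Prop :=
  ∀ (X ι : Type) [Fintype X] [DecidableEq X] [Fintype ι] [DecidableEq ι]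
    (p : X → ℝ), (∀ x, 0 ≤ p x) → (∑ x, p x = 1) →
    ∀ (ρ σ : X → Matrix ι ι ℂ), (∀ x, IsDensity (ρ x)) → (∀ x, IsDensity (σ x)) →
      D (X × ι) (cqState p ρ) (cqState p σ) = ∑ x, (p x : EReal) * D ι (ρ x) (σ x)

/-- The Kronecker (tensor) product of square matrices. -/
def mkron {ι E : Type} (A : Matrix ι ι ℂ) (B : Matrix E E ℂ) : Matrix (ι × E) (ι × E) ℂ :=
  fun p q => A p.1 q.1 * B p.2 q.2

/-- Sub-additivity of a divergence with respect to tensor-product states. -/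
def DivSubAdditive (D : DivFam) : Prop :=
  ∀ (ι E : Type) [Fintype ι] [DecidableEq ι] [Fintype E] [DecidableEq E]
    (ρ σ : Matrix ι ι ℂ) (ω τ : Matrix E E ℂ),
    IsDensity ρ → IsDensity σ → IsDensity ω → IsDensity τ →
      D (ι × E) (mkron ρ ω) (mkron σ τ) ≤ D ι ρ σ + D E ω τ

/-- The classical-quantum channel `ρ ↦ Σ_x ⟨x|ρ|x⟩ ν^x`. -/
def cqChannel {X κ : Type} [Fintype X] [Fintype κ] (ν : X → Matrix κ κ ℂ) :
    Matrix X X ℂ → Matrix κ κ ℂ :=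
  fun ρ => ∑ x, ρ x x • ν x

/-- The maximally entangled state of Schmidt rank `|ι|` on `ι × ι`. -/
def maxEnt (ι : Type) [Fintype ι] [DecidableEq ι] : Matrix (ι × ι) (ι × ι) ℂ :=
  fun p q => if p.1 = p.2 ∧ q.1 = q.2 then ((Fintype.card ι : ℂ))⁻¹ else 0

/-- An `(m+1)`-round adaptive channel discrimination protocol: registers `R_0, …, R_m`,
a shared initial state, adaptive channels between channel uses, and a final measurement. -/
structure Protocol (ι κ : Type) [Fintype ι] [DecidableEq ι] [Fintype κ] [DecidableEq κ]
    (m : ℕ) where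
  r : ℕ → ℕ
  init : Matrix (Fin (r 0) × ι) (Fin (r 0) × ι) ℂ
  init_density : IsDensity init
  adapt : ∀ i : ℕ, Matrix (Fin (r i) × κ) (Fin (r i) × κ) ℂ →
      Matrix (Fin (r (i + 1)) × ι) (Fin (r (i + 1)) × ι) ℂ
  adapt_channel : ∀ i, i < m → IsChannel (adapt i)
  meas : Matrix (Fin (r m) × κ) (Fin (r m) × κ) ℂ
  meas_psd : meas.PosSemidef
  meas_le_one : ((1 : Matrix (Fin (r m) × κ) (Fin (r m) × κ) ℂ) - meas).PosSemidef

namespace Protocol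

variable {ι κ : Type} [Fintype ι] [DecidableEq ι] [Fintype κ] [DecidableEq κ] {m : ℕ}

/-- The state on `R_i ⊗ A` just before the `(i+1)`-st channel use, when the channel is `Ch`. -/
def evolve (P : Protocol ι κ m) (Ch : Matrix ι ι ℂ → Matrix κ κ ℂ) :
    (i : ℕ) → Matrix (Fin (P.r i) × ι) (Fin (P.r i) × ι) ℂ
  | 0 => P.init
  | (i + 1) => P.adapt i (idTensor Ch (P.evolve Ch i))

/-- The final state on `R_m ⊗ B` after all `m + 1` channel uses. -/
def final (P : Protocol ι κ m) (Ch : Matrix ι ι ℂ → Matrix κ κ ℂ) :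
    Matrix (Fin (P.r m) × κ) (Fin (P.r m) × κ) ℂ :=
  idTensor Ch (P.evolve Ch m)

/-- The probability of accepting (deciding for the null hypothesis). -/
def acceptProb (P : Protocol ι κ m) (Ch : Matrix ι ι ℂ → Matrix κ κ ℂ) : ℝ :=
  ((P.meas * P.final Ch).trace).re

/-- The type I error probability `Tr[(I − Q) ρ'⁽ⁿ⁾]`. -/
def typeI (P : Protocol ι κ m) (N : Matrix ι ι ℂ → Matrix κ κ ℂ) : ℝ :=
  ((((1 : Matrix (Fin (P.r m) × κ) (Fin (P.r m) × κ) ℂ) - P.meas) * P.final N).trace).re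

/-- The type II error probability `Tr[Q τ'⁽ⁿ⁾]`. -/
def typeII (P : Protocol ι κ m) (M : Matrix ι ι ℂ → Matrix κ κ ℂ) : ℝ :=
  ((P.meas * P.final M).trace).re

end Protocol

/-- The binary (classical) state `diag(p, 1−p)`. -/
def binState (p : ℝ) : Matrix (Fin 2) (Fin 2) ℂ :=
  Matrix.diagonal (fun i => if i = 0 then (p : ℂ) else ((1 - p : ℝ) : ℂ))

/-- The binary entropy `h₂(ε)`. -/
def h2 (ε : ℝ) : ℝ := -(ε * Real.logb 2 ε) - (1 - ε) * Real.logb 2 (1 - ε)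

/-- `ζ_n(ε, N, M)` with `n = m + 1`: the optimal type II error exponent among all
`(m+1)`-round adaptive protocols with type I error at most `ε`. -/
def steinExp {ι κ : Type} [Fintype ι] [DecidableEq ι] [Fintype κ] [DecidableEq κ]
    (N M : Matrix ι ι ℂ → Matrix κ κ ℂ) (m : ℕ) (ε : ℝ) : EReal :=
  ⨆ (P : Protocol ι κ m) (_ : P.typeI N ≤ ε),
    (((m + 1 : ℝ))⁻¹ : EReal) * negLog2 (P.typeII M)

/-- Partial trace over the (left) reference system. -/
def ptraceLeft {R ι : Type} [Fintype R] (ψ : Matrix (R × ι) (R × ι) ℂ) : Matrix ι ι ℂ :=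
  fun a b => ∑ r, ψ (r, a) (r, b)

/-- The energy-constrained generalized channel divergence. -/
def eChannelDiv (D : DivFam) {ι κ : Type} [Fintype ι] [DecidableEq ι] [Fintype κ] [DecidableEq κ]
    (H : Matrix ι ι ℂ) (E : ℝ) (N M : Matrix ι ι ℂ → Matrix κ κ ℂ) : EReal :=
  ⨆ (R : ℕ) (ψ : Matrix (Fin R × ι) (Fin R × ι) ℂ) (_ : IsDensity ψ)
    (_ : ((H * ptraceLeft ψ).trace).re ≤ E),
      D (Fin R × κ) (idTensor N ψ) (idTensor M ψ)

/-- The energy-constrained amortized channel divergence. -/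
def eAmortizedDiv (D : DivFam) {ι κ : Type} [Fintype ι] [DecidableEq ι] [Fintype κ] [DecidableEq κ]
    (H : Matrix ι ι ℂ) (E : ℝ) (N M : Matrix ι ι ℂ → Matrix κ κ ℂ) : EReal :=
  ⨆ (R : ℕ) (ρ : Matrix (Fin R × ι) (Fin R × ι) ℂ) (σ : Matrix (Fin R × ι) (Fin R × ι) ℂ)
    (_ : IsDensity ρ) (_ : IsDensity σ)
    (_ : ((H * ptraceLeft ρ).trace).re ≤ E) (_ : ((H * ptraceLeft σ).trace).re ≤ E),
      D (Fin R × κ) (idTensor N ρ) (idTensor M σ) - D (Fin R × ι) ρ σ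

/-- `sup_α(ρ/σ)`: supremum of `Tr[Λρ]/Tr[Λσ]` over Hermitian `Λ` with `α⁻¹ I ≤ Λ ≤ I`. -/
def hilbertSup {ι : Type} [Fintype ι] [DecidableEq ι] (α : ℝ) (ρ σ : Matrix ι ι ℂ) : ℝ :=
  sSup { t : ℝ | ∃ Λ : Matrix ι ι ℂ, Λ.IsHermitian ∧
    (Λ - (α⁻¹ : ℝ) • (1 : Matrix ι ι ℂ)).PosSemidef ∧
    ((1 : Matrix ι ι ℂ) - Λ).PosSemidef ∧
    t = ((Λ * ρ).trace).re / ((Λ * σ).trace).re }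

/-- The Hilbert `α`-divergence `H_α(ρ‖σ)`, with `H₁(ρ‖σ) = ‖ρ−σ‖₁ / (2 ln 2)`. -/
def hilbertDiv {ι : Type} [Fintype ι] [DecidableEq ι] (α : ℝ) (ρ σ : Matrix ι ι ℂ) : ℝ :=
  if α = 1 then (2 * Real.log 2)⁻¹ * traceNorm (ρ - σ)
  else (α / (α - 1)) * Real.logb 2 (hilbertSup α ρ σ)

/-!
Along the protocol, each channel use raises the divergence between the two runs by at most the
amortized divergence `A`, and the intermediate processing channels cannot raise it (data
processing). The two runs start from the same state, whose divergence with itself is `≤ 0` by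
faithfulness, so after `n` uses the final states have divergence at most `n · A`. The final
test `{Q, 1 - Q}` is itself a channel, mapping the final states to `diag(p, 1 - p)` and
`diag(q, 1 - q)`, so a last application of data processing bounds `D(p‖q)`.
-/

open Matrix Kronecker

lemma idTensor_apply {R ι κ : Type} (Φ : Matrix ι ι ℂ → Matrix κ κ ℂ)
    (X : Matrix (R × ι) (R × ι) ℂ) (p q : R × κ) :
    idTensor Φ X p q = Φ (Matrix.of fun a b => X (p.1, a) (q.1, b)) p.2 q.2 :=
  rfl

lemma IsChannel.posSemidef_apply {ι κ : Type} [Fintype ι] [Fintype κ]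
    {Φ : Matrix ι ι ℂ → Matrix κ κ ℂ} (hΦ : IsChannel Φ) {X : Matrix ι ι ℂ} (hX : X.PosSemidef) :
    (Φ X).PosSemidef :=
  (hΦ.compPos 1 _ (hX.submatrix Prod.snd)).submatrix fun a => ((0 : Fin 1), a)

lemma IsChannel.isDensity_apply {ι κ : Type} [Fintype ι] [Fintype κ]
    {Φ : Matrix ι ι ℂ → Matrix κ κ ℂ} (hΦ : IsChannel Φ) {X : Matrix ι ι ℂ} (hX : IsDensity X) :
    IsDensity (Φ X) :=
  ⟨hΦ.posSemidef_apply hX.1, (hΦ.tracePres X).trans hX.2⟩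

lemma trace_idTensor {R ι κ : Type} [Fintype R] [Fintype ι] [Fintype κ]
    {Φ : Matrix ι ι ℂ → Matrix κ κ ℂ} (hΦ : ∀ X, (Φ X).trace = X.trace)
    (X : Matrix (R × ι) (R × ι) ℂ) : (idTensor Φ X).trace = X.trace := by
  simp only [trace, diag, idTensor_apply, Fintype.sum_prod_type]
  exact Finset.sum_congr rfl fun r _ => hΦ _

lemma IsChannel.isDensity_idTensor {ι κ : Type} [Fintype ι] [Fintype κ] {k : ℕ}
    {Φ : Matrix ι ι ℂ → Matrix κ κ ℂ} (hΦ : IsChannel Φ)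
    {X : Matrix (Fin k × ι) (Fin k × ι) ℂ} (hX : IsDensity X) : IsDensity (idTensor Φ X) :=
  ⟨hΦ.compPos k X hX.1, (trace_idTensor hΦ.tracePres X).trans hX.2⟩

def krausMap {ι κ L : Type} [Fintype ι] [Fintype L] (K : L → Matrix κ ι ℂ)
    (X : Matrix ι ι ℂ) : Matrix κ κ ℂ :=
  ∑ l, K l * X * (K l)ᴴ

lemma idTensor_krausMap {R ι κ L : Type} [Fintype R] [DecidableEq R] [Fintype ι] [Fintype L]
    (K : L → Matrix κ ι ℂ) (X : Matrix (R × ι) (R × ι) ℂ) :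
    idTensor (krausMap K) X
      = ∑ l, ((1 : Matrix R R ℂ) ⊗ₖ K l) * X * ((1 : Matrix R R ℂ) ⊗ₖ K l)ᴴ := by
  ext ⟨r, b⟩ ⟨s, c⟩
  simp only [idTensor_apply, krausMap, Matrix.sum_apply, mul_apply, of_apply, conjTranspose_apply,
    Fintype.sum_prod_type, kroneckerMap_apply, one_apply, apply_ite star, star_zero, ite_mul,
    zero_mul, one_mul, mul_ite, mul_zero, Finset.sum_mul, Finset.sum_ite_irrel,
    Finset.sum_const_zero, Finset.sum_ite_eq, Finset.mem_univ, if_true]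

lemma isChannel_krausMap {ι κ L : Type} [Fintype ι] [DecidableEq ι] [Fintype κ] [Fintype L]
    (K : L → Matrix κ ι ℂ) (hK : ∑ l, (K l)ᴴ * K l = 1) :
    IsChannel (krausMap K) where
  linear :=
    ⟨fun X Y => by simp only [krausMap, Matrix.mul_add, Matrix.add_mul, Finset.sum_add_distrib],
      fun c X => by simp only [krausMap, Matrix.mul_smul, Matrix.smul_mul, Finset.smul_sum]⟩
  tracePres X := by
    simp_rw [krausMap, trace_sum, trace_mul_cycle (K _) X]
    rw [← trace_sum, ← Finset.sum_mul, hK, Matrix.one_mul]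
  compPos k X hX := by
    rw [idTensor_krausMap]
    exact posSemidef_sum _ fun l _ => hX.mul_mul_conjTranspose_same _

def povmChannel {J ι : Type} [Fintype ι] [DecidableEq J] (E : J → Matrix ι ι ℂ) :
    Matrix ι ι ℂ → Matrix J J ℂ :=
  fun X => diagonal fun j => (E j * X).trace

open scoped MatrixOrder in
lemma isChannel_povmChannel {J ι : Type} [Fintype J] [DecidableEq J] [Fintype ι] [DecidableEq ι]
    {E : J → Matrix ι ι ℂ} (hE : ∀ j, (E j).PosSemidef) (hsum : ∑ j, E j = 1) :
    IsChannel (povmChannel E) := by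
  -- With `E j = B jᴴ * B j`, the Kraus operators are `|j⟩⟨c| * B j`.
  choose B hB using fun j => CStarAlgebra.nonneg_iff_eq_star_mul_self.mp (hE j).nonneg
  let K : J × ι → Matrix J ι ℂ := fun p => single p.1 p.2 (1 : ℂ) * B p.1
  have hKK : ∑ p, (K p)ᴴ * K p = 1 :=
    calc ∑ p, (K p)ᴴ * K p = ∑ j, (B j)ᴴ * (∑ c, single c c (1 : ℂ)) * B j := by
          simp only [K, Fintype.sum_prod_type, conjTranspose_mul, conjTranspose_single, star_one,
            Matrix.mul_sum, Matrix.sum_mul, Matrix.mul_assoc]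
          simp only [← Matrix.mul_assoc (single _ _ _), single_mul_single_same, one_mul]
      _ = 1 := by simp only [sum_single_one, Matrix.mul_one, ← star_eq_conjTranspose, ← hB, hsum]
  have hkraus : povmChannel E = krausMap K := by
    funext X
    calc povmChannel E X = ∑ j, ∑ c, single j j ((B j * X * (B j)ᴴ) c c) := by
          rw [povmChannel, ← sum_single_eq_diagonal]
          refine Finset.sum_congr rfl fun j _ => ?_
          rw [hB j, star_eq_conjTranspose, ← trace_mul_cycle, trace]
          exact map_sum (singleAddMonoidHom j j) _ _
      _ = ∑ j, ∑ c,
            (single j c 1 : Matrix J ι ℂ) * (B j * X * (B j)ᴴ) * (single c j 1 : Matrix ι J ℂ) := by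
          simp only [single_mul_mul_single, one_mul, mul_one]
      _ = krausMap K X := by
          simp only [krausMap, K, Fintype.sum_prod_type, conjTranspose_mul, conjTranspose_single,
            star_one, Matrix.mul_assoc]
  rw [hkraus]
  exact isChannel_krausMap K hKK

lemma Matrix.IsHermitian.ofReal_re_trace_mul {ι : Type} [Fintype ι] {A B : Matrix ι ι ℂ}
    (hA : A.IsHermitian) (hB : B.IsHermitian) : (((A * B).trace.re : ℝ) : ℂ) = (A * B).trace := by
  have h := trace_conjTranspose (A * B)
  rw [conjTranspose_mul, hA.eq, hB.eq, trace_mul_comm B A] at h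
  exact Complex.conj_eq_iff_re.mp h.symm

lemma povmChannel_pair_apply {ι : Type} [Fintype ι] [DecidableEq ι] {Q ρ : Matrix ι ι ℂ}
    (hQ : Q.IsHermitian) (hρ : ρ.IsHermitian) (htr : ρ.trace = 1) :
    povmChannel ![Q, 1 - Q] ρ = binState (Q * ρ).trace.re := by
  rw [povmChannel, binState]
  congr 1
  funext j
  fin_cases j
  · simp [hQ.ofReal_re_trace_mul hρ]
  · simp [Matrix.sub_mul, htr, hQ.ofReal_re_trace_mul hρ]

lemma EReal.le_succ_mul_of_amortized {m : ℕ} {a b : ℕ → EReal} {A : EReal}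
    (h₀ : a 0 ≤ 0) (hstep : ∀ i < m, a (i + 1) ≤ b i) (hamort : ∀ i ≤ m, b i - a i ≤ A) :
    b m ≤ ((m + 1 : ℕ) : EReal) * A := by
  rcases eq_or_ne A ⊤ with rfl | hA
  · rw [EReal.mul_top_of_pos (by exact_mod_cast Nat.succ_pos m)]
    exact le_top
  have hsucc : ∀ k : ℕ, k • A + A = (k + 1) • A := fun k => (succ_nsmul A k).symm
  have hnsmul : ∀ k : ℕ, k • A ≠ ⊤ := fun k => by
    induction k with
    | zero => simp
    | succ k ih => rw [← hsucc]; exact EReal.add_ne_top ih hA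
  have hout : ∀ i ≤ m, a i ≤ i • A → b i ≤ (i + 1) • A := fun i hi ha =>
    calc b i ≤ A + a i :=
          (EReal.sub_le_iff_le_add (.inr hA) (.inl (ne_top_of_le_ne_top (hnsmul i) ha))).1
            (hamort i hi)
      _ ≤ A + i • A := add_le_add_right ha A
      _ = (i + 1) • A := by rw [add_comm, hsucc]
  have hin : ∀ i ≤ m, a i ≤ i • A := fun i => by
    induction i with
    | zero => simpa using h₀
    | succ i ih =>
      intro hi
      exact (hstep i hi).trans (hout i (by omega) (ih (by omega)))
  rw [← EReal.nsmul_eq_mul]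
  exact hout m le_rfl (hin m le_rfl)

lemma le_amortizedDiv (D : DivFam) {ι κ : Type} [Fintype ι] [DecidableEq ι] [Fintype κ]
    [DecidableEq κ] (N M : Matrix ι ι ℂ → Matrix κ κ ℂ) {R : ℕ}
    {ρ σ : Matrix (Fin R × ι) (Fin R × ι) ℂ} (hρ : IsDensity ρ) (hσ : IsDensity σ) :
    D (Fin R × κ) (idTensor N ρ) (idTensor M σ) - D (Fin R × ι) ρ σ ≤ amortizedDiv D N M :=
  le_iSup_of_le R <| le_iSup_of_le ρ <| le_iSup_of_le σ <| le_iSup_of_le hρ <|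
    le_iSup_of_le hσ le_rfl

namespace Protocol

variable {ι κ : Type} [Fintype ι] [DecidableEq ι] [Fintype κ] [DecidableEq κ] {m : ℕ}
  (P : Protocol ι κ m) {Ch : Matrix ι ι ℂ → Matrix κ κ ℂ}

lemma isDensity_evolve (hCh : IsChannel Ch) {i : ℕ} (hi : i ≤ m) : IsDensity (P.evolve Ch i) := by
  induction i with
  | zero => exact P.init_density
  | succ i ih =>
    exact (P.adapt_channel i hi).isDensity_apply (hCh.isDensity_idTensor (ih (by omega)))

lemma isDensity_final (hCh : IsChannel Ch) : IsDensity (P.final Ch) :=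
  hCh.isDensity_idTensor (P.isDensity_evolve hCh le_rfl)

lemma povmChannel_final (hCh : IsChannel Ch) :
    povmChannel ![P.meas, 1 - P.meas] (P.final Ch) = binState (P.acceptProb Ch) :=
  povmChannel_pair_apply P.meas_psd.isHermitian (P.isDensity_final hCh).1.isHermitian
    (P.isDensity_final hCh).2

lemma div_final_le (D : DivFam) (hdp : DivDataProcessing D) (hfaith : DivFaithful D)
    {N M : Matrix ι ι ℂ → Matrix κ κ ℂ} (hN : IsChannel N) (hM : IsChannel M) :
    D _ (P.final N) (P.final M) ≤ ((m + 1 : ℕ) : EReal) * amortizedDiv D N M :=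
  EReal.le_succ_mul_of_amortized (a := fun i => D _ (P.evolve N i) (P.evolve M i))
    (hfaith _ P.init P.init_density)
    (fun i hi => hdp _ _ _ (P.adapt_channel i hi) _ _
      (hN.isDensity_idTensor (P.isDensity_evolve hN hi.le))
      (hM.isDensity_idTensor (P.isDensity_evolve hM hi.le)))
    (fun _ hi => le_amortizedDiv D N M (P.isDensity_evolve hN hi) (P.isDensity_evolve hM hi))

end Protocol

/-- Meta-converse for channel discrimination: for an `n = m + 1`-round
adaptive protocol with final decision probabilities `p`, `q`, and any faithful generalized
divergence, `D(p‖q) ≤ n · D^𝒜(N‖M)`. -/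
theorem meta_converse
    (D : DivFam) (hdp : DivDataProcessing D) (hfaith : DivFaithful D)
    {ι κ : Type} [Fintype ι] [DecidableEq ι] [Fintype κ] [DecidableEq κ]
    (N M : Matrix ι ι ℂ → Matrix κ κ ℂ) (hN : IsChannel N) (hM : IsChannel M)
    (m : ℕ) (P : Protocol ι κ m) :
    D (Fin 2) (binState (P.acceptProb N)) (binState (P.acceptProb M)) ≤
      ((m + 1 : ℕ) : EReal) * amortizedDiv D N M := by
  have hmeas : IsChannel (povmChannel ![P.meas, 1 - P.meas]) :=
    isChannel_povmChannel (Fin.forall_fin_two.2 ⟨P.meas_psd, P.meas_le_one⟩)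
      (by simp [Fin.sum_univ_two])
  rw [← P.povmChannel_final hN, ← P.povmChannel_final hM]
  exact (hdp _ _ _ hmeas _ _ (P.isDensity_final hN) (P.isDensity_final hM)).trans
    (P.div_final_le D hdp hfaith hN hM)

end
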